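/- arXiv:2303.10544 — 2 statements merged into one kernel-verified Lean document; each statement's English description precedes it below -/
import Mathlib

section
/- Let M be the Choi-Jamiołkowski matrix of a linear map 𝓜 on matrices, M = Σᵢⱼ |i⟩⟨j|ᵀ ⊗ 𝓜(|i⟩⟨j|), and let ρ₁ be any matrix. Then Tr₁[(1/2)(M(ρ₁⊗I) + (ρ₁⊗I)M)] = 𝓜(ρ₁), i.e., the partial trace of the pseudo-density matrix over the first factor equals the output state of the channel. -/
open Matrix Kronecker

/-- Partial trace over the first tensor factor. -/
noncomputable def ptraceLeft {d₁ d₂ : Type*} [Fintype d₁]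
    (M : Matrix (d₁ × d₂) (d₁ × d₂) ℂ) : Matrix d₂ d₂ ℂ :=
  fun k l => ∑ i : d₁, M (i, k) (i, l)

/-- The Choi–Jamiołkowski matrix `M = Σᵢⱼ |i⟩⟨j|ᵀ ⊗ 𝓜(|i⟩⟨j|)` of a linear map on matrices. -/
noncomputable def choiMatrix {d : Type*} [Fintype d] [DecidableEq d]
    (𝓜 : Matrix d d ℂ →ₗ[ℂ] Matrix d d ℂ) : Matrix (d × d) (d × d) ℂ :=
  ∑ i : d, ∑ j : d, (Matrix.single i j (1 : ℂ))ᵀ ⊗ₖ 𝓜 (Matrix.single i j 1)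

/-!
The partial trace over the first factor is cyclic with respect to operators `C ⊗ I` acting on
that factor, so both halves of the pseudo-density matrix have the same partial trace. For the
Choi matrix, `Tr₁[(|i⟩⟨j|ᵀ ⊗ 𝓜(|i⟩⟨j|)) (ρ ⊗ I)] = Tr(|j⟩⟨i| ρ) 𝓜(|i⟩⟨j|) = ρᵢⱼ 𝓜(|i⟩⟨j|)`,
and summing over `i, j` gives `𝓜(ρ)` by linearity.
-/

section PartialTrace

variable {d₁ d₂ : Type*} [Fintype d₁]

theorem ptraceLeft_add (X Y : Matrix (d₁ × d₂) (d₁ × d₂) ℂ) :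
    ptraceLeft (X + Y) = ptraceLeft X + ptraceLeft Y := by
  ext k l
  simp only [ptraceLeft, Matrix.add_apply, Finset.sum_add_distrib]

theorem ptraceLeft_smul (c : ℂ) (X : Matrix (d₁ × d₂) (d₁ × d₂) ℂ) :
    ptraceLeft (c • X) = c • ptraceLeft X := by
  ext k l
  simp only [ptraceLeft, Matrix.smul_apply, smul_eq_mul, Finset.mul_sum]

theorem ptraceLeft_sum {ι : Type*} (s : Finset ι) (X : ι → Matrix (d₁ × d₂) (d₁ × d₂) ℂ) :
    ptraceLeft (∑ i ∈ s, X i) = ∑ i ∈ s, ptraceLeft (X i) := by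
  ext k l
  simp only [ptraceLeft, Matrix.sum_apply]
  exact Finset.sum_comm

theorem ptraceLeft_kronecker (A : Matrix d₁ d₁ ℂ) (B : Matrix d₂ d₂ ℂ) :
    ptraceLeft (A ⊗ₖ B) = trace A • B := by
  ext k l
  simp only [ptraceLeft, kroneckerMap_apply, Matrix.smul_apply, smul_eq_mul, trace, diag_apply,
    Finset.sum_mul]

theorem ptraceLeft_mul_kronecker_one_comm [Fintype d₂] [DecidableEq d₂]
    (X : Matrix (d₁ × d₂) (d₁ × d₂) ℂ) (C : Matrix d₁ d₁ ℂ) :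
    ptraceLeft (X * (C ⊗ₖ (1 : Matrix d₂ d₂ ℂ))) = ptraceLeft ((C ⊗ₖ 1) * X) := by
  ext k l
  simp only [ptraceLeft, mul_apply, kroneckerMap_apply, one_apply, Fintype.sum_prod_type,
    mul_ite, ite_mul, mul_one, mul_zero, zero_mul, Finset.sum_ite_eq,
    Finset.sum_ite_eq', Finset.mem_univ, if_true]
  rw [Finset.sum_comm]
  exact Finset.sum_congr rfl fun _ _ => Finset.sum_congr rfl fun _ _ => mul_comm _ _

end PartialTrace

theorem ptraceLeft_choiMatrix_mul_kronecker_one {d : Type*} [Fintype d] [DecidableEq d]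
    (𝓜 : Matrix d d ℂ →ₗ[ℂ] Matrix d d ℂ) (ρ : Matrix d d ℂ) :
    ptraceLeft (choiMatrix 𝓜 * (ρ ⊗ₖ 1)) = 𝓜 ρ := by
  have hρ : 𝓜 ρ = ∑ i : d, ∑ j : d, ρ i j • 𝓜 (single i j 1) := by
    conv_lhs => rw [matrix_eq_sum_single ρ]
    simp only [map_sum, ← map_smul, smul_single, smul_eq_mul, mul_one]
  rw [hρ, choiMatrix, Finset.sum_mul, ptraceLeft_sum]
  refine Finset.sum_congr rfl fun i _ => ?_
  rw [Finset.sum_mul, ptraceLeft_sum]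
  refine Finset.sum_congr rfl fun j _ => ?_
  rw [← mul_kronecker_mul, mul_one, ptraceLeft_kronecker, transpose_single, trace_single_mul,
    one_smul]

/-- Tracing the PDM `(1/2)(M(ρ₁⊗I) + (ρ₁⊗I)M)` over the first factor yields the
output state `𝓜(ρ₁)` of the channel. -/
theorem pdm_ptrace_first_eq_output_state {d : Type*} [Fintype d] [DecidableEq d]
    (𝓜 : Matrix d d ℂ →ₗ[ℂ] Matrix d d ℂ) (ρ₁ : Matrix d d ℂ) :
    ptraceLeft ((2 : ℂ)⁻¹ • (choiMatrix 𝓜 * (ρ₁ ⊗ₖ 1) + (ρ₁ ⊗ₖ 1) * choiMatrix 𝓜)) = 𝓜 ρ₁ := by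
  rw [ptraceLeft_smul, ptraceLeft_add, ← ptraceLeft_mul_kronecker_one_comm,
    ptraceLeft_choiMatrix_mul_kronecker_one, ← two_smul ℂ (𝓜 ρ₁), smul_smul,
    inv_mul_cancel₀ two_ne_zero, one_smul]
end

section
/- Let 𝓛(ρ) = ⟨0|ρ|0⟩|0⟩⟨0| + ⟨1|ρ|1⟩|1⟩⟨1| be the measure-and-prepare channel with Choi matrix M = (1/2)(σ₀⊗σ₀ + σ₃⊗σ₃), and let ρ_A be a single-qubit density matrix with Bloch coordinates x = Tr(ρ_A σ₁), y = Tr(ρ_A σ₂), z = Tr(ρ_A σ₃). Then the pseudo-density matrix R = (1/2)(M(ρ_A⊗I) + (ρ_A⊗I)M) has a negative eigenvalue if and only if x² + y² > 0. -/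
/-!
The Choi matrix `M` is the projector onto `span {|00⟩, |11⟩}`, so `R` is block diagonal with
respect to the second qubit, its block at `|0⟩` being `[[ρ₀₀, ρ₀₁/2], [ρ₁₀/2, 0]]`. A positive
semidefinite matrix with a zero diagonal entry vanishes on that row and column, so `R ≥ 0` forces
`ρ₀₁ = 0`; conversely, if `ρ₀₁ = 0` then `R` is diagonal with the (nonnegative) diagonal entries
of `ρ` on it. Finally `ρ₀₁ = (x - iy)/2`.
-/

open Matrix Kronecker ComplexOrder

/-- Pauli matrix σ₁. -/
noncomputable def pauli1 : Matrix (Fin 2) (Fin 2) ℂ := !![0, 1; 1, 0]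
/-- Pauli matrix σ₂. -/
noncomputable def pauli2 : Matrix (Fin 2) (Fin 2) ℂ := !![0, -Complex.I; Complex.I, 0]
/-- Pauli matrix σ₃. -/
noncomputable def pauli3 : Matrix (Fin 2) (Fin 2) ℂ := !![1, 0; 0, -1]

/-- The Choi matrix `M = (1/2)(σ₀⊗σ₀ + σ₃⊗σ₃)` of the measure-and-prepare channel. -/
noncomputable def measPrepChoi : Matrix (Fin 2 × Fin 2) (Fin 2 × Fin 2) ℂ :=
  (2 : ℂ)⁻¹ • ((1 : Matrix (Fin 2) (Fin 2) ℂ) ⊗ₖ 1 + pauli3 ⊗ₖ pauli3)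

theorem Matrix.PosSemidef.apply_eq_zero_of_diag_eq_zero {n 𝕜 : Type*} [Fintype n]
    [DecidableEq n] [RCLike 𝕜] {A : Matrix n n 𝕜} (hA : A.PosSemidef) {j : n}
    (hj : A j j = 0) (i : n) : A i j = 0 := by
  have hcol : A *ᵥ Pi.single j 1 = 0 :=
    (hA.dotProduct_mulVec_zero_iff _).1 (by simpa [mulVec_single, dotProduct_single] using hj)
  simpa [mulVec_single] using congr_fun hcol i

theorem Matrix.IsHermitian.exists_eigenvalues_neg_iff {n 𝕜 : Type*} [Fintype n]
    [DecidableEq n] [RCLike 𝕜] {A : Matrix n n 𝕜} (hA : A.IsHermitian) :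
    (∃ i, hA.eigenvalues i < 0) ↔ ¬ A.PosSemidef := by
  simp [hA.posSemidef_iff_eigenvalues_nonneg, Pi.le_def]

theorem apply_zero_one_eq_of_trace_mul_pauli {ρ : Matrix (Fin 2) (Fin 2) ℂ} {x y : ℂ}
    (hx : (ρ * pauli1).trace = x) (hy : (ρ * pauli2).trace = y) :
    ρ 0 1 = (x - y * Complex.I) / 2 := by
  simp [trace, Fin.sum_univ_two, mul_apply, pauli1, pauli2] at hx hy
  linear_combination hx / 2 - Complex.I / 2 * hy + (ρ 0 1 - ρ 1 0) / 2 * Complex.I_sq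

theorem measPrepChoi_eq_diagonal :
    measPrepChoi = diagonal fun p => if p.1 = p.2 then 1 else 0 := by
  ext ⟨i, j⟩ ⟨k, l⟩
  fin_cases i <;> fin_cases j <;> fin_cases k <;> fin_cases l <;>
    norm_num [measPrepChoi, pauli3, kroneckerMap_apply, one_apply]

noncomputable def measPrepPDM (ρ : Matrix (Fin 2) (Fin 2) ℂ) :
    Matrix (Fin 2 × Fin 2) (Fin 2 × Fin 2) ℂ :=
  (2 : ℂ)⁻¹ • (measPrepChoi * (ρ ⊗ₖ 1) + (ρ ⊗ₖ 1) * measPrepChoi)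

theorem measPrepPDM_apply (ρ : Matrix (Fin 2) (Fin 2) ℂ) (p q : Fin 2 × Fin 2) :
    measPrepPDM ρ p q = ((if p.1 = p.2 then 1 else 0) + (if q.1 = q.2 then 1 else 0)) / 2 *
      (ρ p.1 q.1 * (1 : Matrix (Fin 2) (Fin 2) ℂ) p.2 q.2) := by
  simp only [measPrepPDM, measPrepChoi_eq_diagonal, Matrix.smul_apply, Matrix.add_apply,
    diagonal_mul, mul_diagonal, kroneckerMap_apply, smul_eq_mul]
  ring

theorem posSemidef_measPrepPDM_iff {ρ : Matrix (Fin 2) (Fin 2) ℂ} (hρ : ρ.PosSemidef) :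
    (measPrepPDM ρ).PosSemidef ↔ ρ 0 1 = 0 := by
  constructor
  · intro hR
    have hR01 := hR.apply_eq_zero_of_diag_eq_zero (j := (1, 0)) (by simp [measPrepPDM_apply]) (0, 0)
    simpa [measPrepPDM_apply] using hR01
  · intro h01
    have h10 : ρ 1 0 = 0 := by rw [← hρ.isHermitian.apply 1 0, h01, star_zero]
    have hdiag : measPrepPDM ρ = diagonal fun p => if p.1 = p.2 then ρ p.1 p.1 else 0 := by
      ext ⟨i, j⟩ ⟨k, l⟩
      fin_cases i <;> fin_cases j <;> fin_cases k <;> fin_cases l <;>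
        norm_num [measPrepPDM_apply, h01, h10]
    rw [hdiag, posSemidef_diagonal_iff]
    rintro ⟨i, j⟩
    split_ifs
    exacts [hρ.diag_nonneg, le_rfl]

theorem measure_prepare_pdm_negativity_iff_coherence_general
    (ρA : Matrix (Fin 2) (Fin 2) ℂ) (hρ : ρA.PosSemidef)
    (x y : ℝ)
    (hx : (ρA * pauli1).trace = (x : ℂ))
    (hy : (ρA * pauli2).trace = (y : ℂ))
    (R : Matrix (Fin 2 × Fin 2) (Fin 2 × Fin 2) ℂ)
    (hRdef : R = (2 : ℂ)⁻¹ • (measPrepChoi * (ρA ⊗ₖ 1) + (ρA ⊗ₖ 1) * measPrepChoi))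
    (hR : R.IsHermitian) :
    (∃ i, hR.eigenvalues i < 0) ↔ 0 < x ^ 2 + y ^ 2 := by
  change R = measPrepPDM ρA at hRdef
  subst hRdef
  rw [hR.exists_eigenvalues_neg_iff, posSemidef_measPrepPDM_iff hρ,
    apply_zero_one_eq_of_trace_mul_pauli hx hy, ← ne_eq, ← Complex.normSq_pos,
    Complex.normSq_div, Complex.normSq_apply]
  simp [sq]

/-- For the measure-and-prepare channel with Choi matrix `M = (1/2)(σ₀⊗σ₀+σ₃⊗σ₃)` and a
qubit density matrix `ρ_A` with Bloch coordinates `x, y, z`, the PDM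
`R = (1/2)(M(ρ_A⊗I) + (ρ_A⊗I)M)` has a negative eigenvalue iff `x² + y² > 0`. -/
theorem measure_prepare_pdm_negativity_iff_coherence
    (ρA : Matrix (Fin 2) (Fin 2) ℂ) (hρ : ρA.PosSemidef) (hρtr : ρA.trace = 1)
    (x y z : ℝ)
    (hx : (ρA * pauli1).trace = (x : ℂ))
    (hy : (ρA * pauli2).trace = (y : ℂ))
    (hz : (ρA * pauli3).trace = (z : ℂ))
    (R : Matrix (Fin 2 × Fin 2) (Fin 2 × Fin 2) ℂ)
    (hRdef : R = (2 : ℂ)⁻¹ • (measPrepChoi * (ρA ⊗ₖ 1) + (ρA ⊗ₖ 1) * measPrepChoi))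
    (hR : R.IsHermitian) :
    (∃ i, hR.eigenvalues i < 0) ↔ 0 < x ^ 2 + y ^ 2 :=
  measure_prepare_pdm_negativity_iff_coherence_general ρA hρ x y hx hy R hRdef hR
end
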